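/- arXiv:2512.03396 — 4 statements merged into one kernel-verified Lean document; each statement's English description precedes it below -/
import Mathlib

section
/- Let (Ω, F) be a measurable space and let 𝔇 be a map assigning to every bounded measurable X : Ω → ℝ a distribution 𝔇(X). Then the following are equivalent. (a) 𝔇 satisfies: (R1) if X ≥ Y pointwise then 𝔇(X) ≥_fsd 𝔇(Y); (R2) for every uniformly bounded sequence (Xₙ) of bounded measurable functions converging pointwise to a bounded measurable X, the measures 𝔇(Xₙ) converge weakly to 𝔇(X); (R3) for every strictly increasing continuous u : ℝ → ℝ and every bounded measurable X, 𝔇(u ∘ X) equals the pushforward of 𝔇(X) under u. (b) There exists a continuous capacity ν on (Ω, F) such that 𝔇(X)((x, ∞)) = ν({X > x}) for all bounded measurable X and all x ∈ ℝ. -/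
open MeasureTheory Filter Topology

noncomputable section

/-- Bounded measurable real-valued functions with respect to the σ-algebra `m`. -/
def BddMeas {Ω : Type*} (m : MeasurableSpace Ω) (X : Ω → ℝ) : Prop :=
  @Measurable Ω ℝ m _ X ∧ ∃ M : ℝ, ∀ ω, |X ω| ≤ M

/-- A capacity on a measurable space. -/
def IsCapacity {Ω : Type*} (m : MeasurableSpace Ω) (ν : Set Ω → ℝ) : Prop :=
  ν ∅ = 0 ∧ ν Set.univ = 1 ∧
    ∀ A B : Set Ω, @MeasurableSet Ω m A → @MeasurableSet Ω m B → A ⊆ B → ν A ≤ ν B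

/-- A continuous capacity: continuous along increasing and decreasing sequences. -/
def IsContinuousCapacity {Ω : Type*} (m : MeasurableSpace Ω) (ν : Set Ω → ℝ) : Prop :=
  IsCapacity m ν ∧
    (∀ A : ℕ → Set Ω, (∀ n, @MeasurableSet Ω m (A n)) → Monotone A →
      Filter.Tendsto (fun n => ν (A n)) Filter.atTop (nhds (ν (⋃ n, A n)))) ∧
    (∀ A : ℕ → Set Ω, (∀ n, @MeasurableSet Ω m (A n)) → Antitone A →
      Filter.Tendsto (fun n => ν (A n)) Filter.atTop (nhds (ν (⋂ n, A n))))

/-- Supermodularity of a capacity. -/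
def Supermodular {Ω : Type*} (m : MeasurableSpace Ω) (ν : Set Ω → ℝ) : Prop :=
  ∀ A B : Set Ω, @MeasurableSet Ω m A → @MeasurableSet Ω m B →
    ν A + ν B ≤ ν (A ∪ B) + ν (A ∩ B)

/-- A distribution: a compactly supported Borel probability measure on ℝ. -/
def IsDistribution (Q : Measure ℝ) : Prop :=
  IsProbabilityMeasure Q ∧ ∃ a b : ℝ, Q (Set.Icc a b) = 1

/-- `FSDle P Q` means `Q ≥_fsd P` (first-order stochastic dominance). -/
def FSDle (P Q : Measure ℝ) : Prop := ∀ x : ℝ, P (Set.Ioi x) ≤ Q (Set.Ioi x)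

/-- Weak convergence of a sequence of Borel measures on ℝ. -/
def WeakConv (Qn : ℕ → Measure ℝ) (Q : Measure ℝ) : Prop :=
  ∀ f : BoundedContinuousFunction ℝ ℝ,
    Filter.Tendsto (fun n => ∫ x, f x ∂(Qn n)) Filter.atTop (nhds (∫ x, f x ∂Q))

/-- A statistic: strictly fsd-monotone and compactly continuous functional on distributions. -/
def IsStatistic (γ : Measure ℝ → ℝ) : Prop :=
  (∀ Q P : Measure ℝ, IsDistribution Q → IsDistribution P → FSDle P Q → γ P ≤ γ Q) ∧
  (∀ Q P : Measure ℝ, IsDistribution Q → IsDistribution P → FSDle P Q → Q ≠ P → γ P < γ Q) ∧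
  (∀ (Qn : ℕ → Measure ℝ) (Q : Measure ℝ), (∀ n, IsDistribution (Qn n)) → IsDistribution Q →
    (∃ a b : ℝ, ∀ n, Qn n (Set.Icc a b) = 1) → WeakConv Qn Q →
    Filter.Tendsto (fun n => γ (Qn n)) Filter.atTop (nhds (γ Q)))

/-- A certainty-equivalent statistic. -/
def IsCEStatistic (γ : Measure ℝ → ℝ) : Prop :=
  IsStatistic γ ∧ ∀ c : ℝ, γ (MeasureTheory.Measure.dirac c) = c

/-- `D` is the Choquet act-to-distribution mapping associated with the capacity `ν`. -/
def IsChoquetATD {Ω : Type*} (m : MeasurableSpace Ω) (ν : Set Ω → ℝ)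
    (D : (Ω → ℝ) → Measure ℝ) : Prop :=
  ∀ X : Ω → ℝ, BddMeas m X →
    IsDistribution (D X) ∧ ∀ x : ℝ, (D X (Set.Ioi x)).toReal = ν {ω | x < X ω}

/-- The ν-quantile of `X` at level `α`. -/
def capQuantile {Ω : Type*} (ν : Set Ω → ℝ) (X : Ω → ℝ) (α : ℝ) : ℝ :=
  sInf {x : ℝ | ν {ω | x < X ω} < 1 - α}

/-- The quantile function of a distribution. -/
def distQuantile (Q : Measure ℝ) (α : ℝ) : ℝ :=
  sInf {x : ℝ | (Q (Set.Ioi x)).toReal < 1 - α}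

/-- Comonotonic pairs of functions. -/
def Comonotonic {Ω : Type*} (X Y : Ω → ℝ) : Prop :=
  ∀ s s' : Ω, 0 ≤ (X s - X s') * (Y s - Y s')

/-- Real-valued indicator function of a set. -/
def ind {Ω : Type*} (A : Set Ω) : Ω → ℝ := A.indicator fun _ => 1

/-- Atomlessness of `P` in the sense of the paper. -/
def AtomlessOn {Ω : Type*} (G : MeasurableSpace Ω) (P : @Measure Ω G) : Prop :=
  ∀ A : Set Ω, @MeasurableSet Ω G A → ∀ r : ENNReal, r ≤ P A →
    ∃ B : Set Ω, @MeasurableSet Ω G B ∧ B ⊆ A ∧ P B = r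

/-- A capacity is risk conforming if it coincides with `P` on `G`. -/
def RiskConforming {Ω : Type*} (G : MeasurableSpace Ω) (P : @Measure Ω G)
    (ν : Set Ω → ℝ) : Prop :=
  ∀ A : Set Ω, @MeasurableSet Ω G A → ν A = (P A).toReal

/-- A preference relation: a total preorder on the bounded `m`-measurable functions. -/
def TotalPreorderOn {Ω : Type*} (m : MeasurableSpace Ω)
    (pref : (Ω → ℝ) → (Ω → ℝ) → Prop) : Prop :=
  (∀ X Y, BddMeas m X → BddMeas m Y → pref X Y ∨ pref Y X) ∧
  (∀ X Y Z, BddMeas m X → BddMeas m Y → BddMeas m Z → pref X Y → pref Y Z → pref X Z)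

/-- Axiom (M): monotonicity. -/
def AxiomM {Ω : Type*} (m : MeasurableSpace Ω) (pref : (Ω → ℝ) → (Ω → ℝ) → Prop) : Prop :=
  ∀ X Y, BddMeas m X → BddMeas m Y → (∀ ω, Y ω ≤ X ω) → pref X Y

/-- Axiom (RC): risk conformity. -/
def AxiomRC {Ω : Type*} (G : MeasurableSpace Ω) (P : @Measure Ω G)
    (pref : (Ω → ℝ) → (Ω → ℝ) → Prop) : Prop :=
  ∀ X Y, BddMeas G X → BddMeas G Y →
    (∀ x : ℝ, P {ω | x < X ω} = P {ω | x < Y ω}) → pref X Y ∧ pref Y X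

/-- Axiom (SRM): strict risk monotonicity. -/
def AxiomSRM {Ω : Type*} (G : MeasurableSpace Ω) (P : @Measure Ω G)
    (pref : (Ω → ℝ) → (Ω → ℝ) → Prop) : Prop :=
  ∀ X Y, BddMeas G X → BddMeas G Y →
    P {ω | Y ω ≤ X ω} = 1 → 0 < P {ω | Y ω < X ω} → pref X Y ∧ ¬ pref Y X

/-- Axiom (C): continuity (B-closedness of upper and lower contour sets). -/
def AxiomC {Ω : Type*} (m : MeasurableSpace Ω) (pref : (Ω → ℝ) → (Ω → ℝ) → Prop) : Prop :=
  ∀ X, BddMeas m X → ∀ (Yn : ℕ → Ω → ℝ) (Y : Ω → ℝ),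
    (∀ n, BddMeas m (Yn n)) → BddMeas m Y →
    (∃ M : ℝ, ∀ n ω, |Yn n ω| ≤ M) →
    (∀ ω, Filter.Tendsto (fun n => Yn n ω) Filter.atTop (nhds (Y ω))) →
    ((∀ n, pref X (Yn n)) → pref X Y) ∧ ((∀ n, pref (Yn n) X) → pref Y X)

/-- Axiom (CD): cumulative dominance. -/
def AxiomCD {Ω : Type*} (m : MeasurableSpace Ω) (pref : (Ω → ℝ) → (Ω → ℝ) → Prop) : Prop :=
  ∀ X Y, BddMeas m X → BddMeas m Y →
    (∀ x : ℝ, pref (ind {ω | x < X ω}) (ind {ω | x < Y ω}) ∧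
       pref (ind {ω | x < Y ω}) (ind {ω | x < X ω})) →
    pref X Y ∧ pref Y X

/-- `SSDle P Q` means `Q ≥_ssd P` (second-order stochastic dominance). -/
def SSDle (P Q : Measure ℝ) : Prop :=
  ∀ f : ℝ → ℝ, Monotone f → ConcaveOn ℝ Set.univ f → ∫ x, f x ∂P ≤ ∫ x, f x ∂Q

/-- Comonotonic quasiconcavity of a statistic. -/
def ComonotonicQuasiconcave (γ : Measure ℝ → ℝ) : Prop :=
  ∀ Q P R : Measure ℝ, IsDistribution Q → IsDistribution P → IsDistribution R →
    ∀ l : ℝ, 0 ≤ l → l ≤ 1 →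
    (∀ β : ℝ, 0 < β → β < 1 →
      distQuantile R β = l * distQuantile Q β + (1 - l) * distQuantile P β) →
    min (γ Q) (γ P) ≤ γ R

/-- Exactness of a capacity. -/
def ExactCapacity {Ω : Type*} (m : MeasurableSpace Ω) (ν : Set Ω → ℝ) : Prop :=
  ∀ A : Set Ω, @MeasurableSet Ω m A →
    ∃ μ : @Measure Ω m, @IsProbabilityMeasure Ω m μ ∧
      (∀ B : Set Ω, @MeasurableSet Ω m B → ν B ≤ (μ B).toReal) ∧ (μ A).toReal = ν A

/-!
For (a) ⇒ (b) put `ν A = 𝔇(1_A)((1/2, ∞))`. By (R3), `𝔇(1_A)` is invariant under any increasing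
homeomorphism fixing `0` and `1`, so it has no atom at `1/2`. Approximating `1_{X > x}` by
`uₙ ∘ X` with `uₙ` strictly increasing and continuous, (R3) identifies the survival value of
`𝔇(uₙ ∘ X)` at `1/2` with that of `𝔇(X)` at a point `xₙ ↓ x`, and (R2) (portmanteau at the
non-atom `1/2`) gives `𝔇(X)((x, ∞)) = ν {X > x}`; monotonicity and continuity of `ν` come from
(R1) and (R2).

For (b) ⇒ (a), continuity of `ν` gives `ν (liminf Aₙ) ≤ liminf ν Aₙ` and
`limsup ν Aₙ ≤ ν (limsup Aₙ)`, hence convergence of the survival functions of `𝔇(Xₙ)` at the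
continuity points of that of `𝔇(X)`, which forces weak convergence. (R3) holds because
`u⁻¹ (y, ∞)` is empty, everything, or a half-line `(c, ∞)`.
-/

open Set

section MeasuresOnReal

lemma map_apply_Ioi_of_strictMono (μ : Measure ℝ) {u : ℝ → ℝ} (hu : StrictMono u)
    (hc : Continuous u) (c : ℝ) : μ.map u (Ioi (u c)) = μ (Ioi c) := by
  rw [Measure.map_apply hc.measurable measurableSet_Ioi]
  congr 1
  ext t
  simp [hu.lt_iff_lt]

lemma preimage_Ioi_eq_empty_or_univ_or_Ioi {u : ℝ → ℝ} (hu : StrictMono u) (hc : Continuous u)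
    (y : ℝ) : u ⁻¹' Ioi y = ∅ ∨ u ⁻¹' Ioi y = univ ∨ ∃ c, u ⁻¹' Ioi y = Ioi c := by
  by_cases hy : y ∈ range u
  · obtain ⟨c, rfl⟩ := hy
    exact .inr (.inr ⟨c, by ext t; simp [hu.lt_iff_lt]⟩)
  by_cases hlow : ∃ s, u s < y
  · obtain ⟨s, hs⟩ := hlow
    refine .inl (eq_empty_of_forall_notMem fun t (ht : y < u t) => hy ?_)
    exact (isPreconnected_range hc).Icc_subset (mem_range_self s) (mem_range_self t) ⟨hs.le, ht.le⟩
  · simp only [not_exists, not_lt] at hlow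
    exact .inr (.inl (eq_univ_of_forall fun t => (hlow t).lt_of_ne fun h => hy ⟨t, h.symm⟩))

lemma tendsto_measure_Ioi_add_one_div (μ : Measure ℝ) (x : ℝ) :
    Tendsto (fun n : ℕ => μ (Ioi (x + 1 / (n + 1)))) atTop (𝓝 (μ (Ioi x))) := by
  have hmono : Monotone fun n : ℕ => Ioi (x + 1 / (n + 1 : ℝ)) := fun n k hnk =>
    Ioi_subset_Ioi (add_le_add_right (Nat.one_div_le_one_div hnk) x)
  have hUnion : ⋃ n : ℕ, Ioi (x + 1 / (n + 1 : ℝ)) = Ioi x := by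
    ext t
    simp only [mem_iUnion, mem_Ioi]
    refine ⟨fun ⟨n, hn⟩ => by linarith [Nat.one_div_pos_of_nat (α := ℝ) (n := n)], fun ht => ?_⟩
    obtain ⟨n, hn⟩ := exists_nat_one_div_lt (sub_pos.2 ht)
    exact ⟨n, by linarith⟩
  exact hUnion ▸ tendsto_measure_iUnion_atTop hmono

lemma ext_of_measure_Ioi {μ ρ : Measure ℝ} [IsProbabilityMeasure μ] [IsProbabilityMeasure ρ]
    (h : ∀ x, μ (Ioi x) = ρ (Ioi x)) : μ = ρ :=
  Measure.ext_of_Iic μ ρ fun a => by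
    rw [← compl_Ioi, prob_compl_eq_one_sub measurableSet_Ioi,
      prob_compl_eq_one_sub measurableSet_Ioi, h]

lemma IsDistribution.eventually_measure_Ioi_eq_zero {Q : Measure ℝ} (hQ : IsDistribution Q) :
    ∀ᶠ x in atTop, Q (Ioi x) = 0 := by
  obtain ⟨_, a, b, hab⟩ := hQ
  filter_upwards [eventually_ge_atTop b] with x hx
  have hsub : Ioi x ⊆ (Icc a b)ᶜ := fun t ht hmem => absurd hmem.2 (not_le.2 (hx.trans_lt ht))
  exact measure_mono_null hsub ((prob_compl_eq_zero_iff measurableSet_Icc).2 hab)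

lemma IsDistribution.eventually_measure_Ioi_eq_one {Q : Measure ℝ} (hQ : IsDistribution Q) :
    ∀ᶠ x in atBot, Q (Ioi x) = 1 := by
  obtain ⟨_, a, b, hab⟩ := hQ
  filter_upwards [eventually_lt_atBot a] with x hx
  exact le_antisymm prob_le_one (hab ▸ measure_mono fun t ht => hx.trans_le ht.1)

lemma weakConv_iff_tendsto {P : ℕ → ProbabilityMeasure ℝ} {P₀ : ProbabilityMeasure ℝ} :
    WeakConv (fun n => P n) P₀ ↔ Tendsto P atTop (𝓝 P₀) :=
  ProbabilityMeasure.tendsto_iff_forall_integral_tendsto.symm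

lemma WeakConv.tendsto_measure_Ioi {Qn : ℕ → Measure ℝ} {Q : Measure ℝ}
    [hQn : ∀ n, IsProbabilityMeasure (Qn n)] [hQ : IsProbabilityMeasure Q] (h : WeakConv Qn Q)
    {y : ℝ} (hy : Q {y} = 0) : Tendsto (fun n => Qn n (Ioi y)) atTop (𝓝 (Q (Ioi y))) :=
  ProbabilityMeasure.tendsto_measure_of_null_frontier_of_tendsto'
    (weakConv_iff_tendsto (P := fun n => ⟨Qn n, hQn n⟩) (P₀ := ⟨Q, hQ⟩) |>.1 h)
    (by rwa [frontier_Ioi])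

lemma weakConv_of_tendsto_measureReal_Ioi {Qn : ℕ → Measure ℝ} {Q : Measure ℝ}
    [hQn : ∀ n, IsProbabilityMeasure (Qn n)] [hQ : IsProbabilityMeasure Q]
    (h : ∀ x, ContinuousAt (fun y => Q.real (Ioi y)) x →
      Tendsto (fun n => (Qn n).real (Ioi x)) atTop (𝓝 (Q.real (Ioi x)))) :
    WeakConv Qn Q := by
  -- the intervals `Ioc a b` with `a, b` continuity points form a π-system fine enough to test
  -- weak convergence: the discontinuities of the monotone survival function are countable
  set C := {x | ContinuousAt (fun y => Q.real (Ioi y)) x}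
  have hC : Dense C := by
    have hanti : Antitone fun y => Q.real (Ioi y) :=
      fun a b hab => measureReal_mono (Ioi_subset_Ioi hab)
    simpa [C, compl_ofPred] using hanti.countable_not_continuousAt.dense_compl ℝ
  have hpi : IsPiSystem (image2 Ioc C C) := by
    rintro _ ⟨a, ha, b, hb, rfl⟩ _ ⟨c, hc, d, hd, rfl⟩ -
    rw [Ioc_inter_Ioc]
    exact mem_image2_of_mem (by rcases max_choice a c with h | h <;> rwa [h])
      (by rcases min_choice b d with h | h <;> rwa [h])
  refine (weakConv_iff_tendsto (P := fun n => ⟨Qn n, hQn n⟩) (P₀ := ⟨Q, hQ⟩)).2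
    (hpi.tendsto_probabilityMeasure_of_tendsto_of_mem ?_ ?_ ?_)
  · rintro _ ⟨a, -, b, -, rfl⟩
    exact measurableSet_Ioc
  · intro U hU x hx
    obtain ⟨l, r, ⟨hl, hr⟩, hsub⟩ := mem_nhds_iff_exists_Ioo_subset.1 (hU.mem_nhds hx)
    obtain ⟨a, ha, hla, hax⟩ := hC.exists_between hl
    obtain ⟨b, hb, hxb, hbr⟩ := hC.exists_between hr
    exact ⟨Ioc a b, mem_image2_of_mem ha hb, Ioc_mem_nhds hax hxb,
      fun t ht => hsub ⟨hla.trans ht.1, ht.2.trans_lt hbr⟩⟩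
  · rintro _ ⟨a, ha, b, hb, rfl⟩
    refine NNReal.tendsto_coe.1
      (?_ : Tendsto (fun n => (Qn n).real (Ioc a b)) atTop (𝓝 (Q.real (Ioc a b))))
    rcases le_or_gt a b with hab | hba
    · have hdiff (μ : Measure ℝ) [IsFiniteMeasure μ] :
          μ.real (Ioc a b) = μ.real (Ioi a) - μ.real (Ioi b) := by
        rw [← Ioi_sdiff_Ioi, measureReal_sdiff (Ioi_subset_Ioi hab) measurableSet_Ioi]
      simp only [hdiff]
      exact (h a ha).sub (h b hb)
    · simp [Ioc_eq_empty_of_le hba.le]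

end MeasuresOnReal

section Capacity

variable {Ω : Type*} [m : MeasurableSpace Ω] {ν : Set Ω → ℝ}

lemma IsCapacity.mono (hν : IsCapacity m ν) {A B : Set Ω} (hA : MeasurableSet A)
    (hB : MeasurableSet B) (hAB : A ⊆ B) : ν A ≤ ν B :=
  hν.2.2 A B hA hB hAB

lemma IsCapacity.nonneg (hν : IsCapacity m ν) {A : Set Ω} (hA : MeasurableSet A) : 0 ≤ ν A :=
  hν.1 ▸ hν.mono MeasurableSet.empty hA (empty_subset A)

lemma IsCapacity.le_one (hν : IsCapacity m ν) {A : Set Ω} (hA : MeasurableSet A) : ν A ≤ 1 :=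
  hν.2.1 ▸ hν.mono hA MeasurableSet.univ (subset_univ A)

lemma IsContinuousCapacity.le_liminf (hν : IsContinuousCapacity m ν) {A : ℕ → Set Ω}
    (hA : ∀ n, MeasurableSet (A n)) :
    ν (liminf A atTop) ≤ liminf (fun n => ν (A n)) atTop := by
  set C : ℕ → Set Ω := fun k => ⋂ n ≥ k, A n
  have hC : ∀ k, MeasurableSet (C k) := fun k => .biInter (to_countable _) fun n _ => hA n
  have hCA : ∀ k, ∀ n ≥ k, C k ⊆ A n := fun k n hn => biInter_subset_of_mem hn
  have hCmono : Monotone C := fun k l hkl => subset_iInter₂ fun n hn => hCA k n (hkl.trans hn)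
  rw [liminf_eq_iSup_iInf_of_nat]
  refine le_of_tendsto' (hν.2.1 C hC hCmono) fun k => le_liminf_of_le
    (isCoboundedUnder_ge_of_le atTop fun n => hν.1.le_one (hA n)) ?_
  filter_upwards [eventually_ge_atTop k] with n hn
  exact hν.1.mono (hC k) (hA n) (hCA k n hn)

lemma IsContinuousCapacity.limsup_le (hν : IsContinuousCapacity m ν) {A : ℕ → Set Ω}
    (hA : ∀ n, MeasurableSet (A n)) :
    limsup (fun n => ν (A n)) atTop ≤ ν (limsup A atTop) := by
  set C : ℕ → Set Ω := fun k => ⋃ n ≥ k, A n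
  have hC : ∀ k, MeasurableSet (C k) := fun k => .biUnion (to_countable _) fun n _ => hA n
  have hAC : ∀ k, ∀ n ≥ k, A n ⊆ C k := fun k n hn => subset_biUnion_of_mem hn
  have hCanti : Antitone C := fun k l hkl => iUnion₂_subset fun n hn => hAC k n (hkl.trans hn)
  rw [limsup_eq_iInf_iSup_of_nat]
  refine ge_of_tendsto' (hν.2.2 C hC hCanti) fun k => limsup_le_of_le
    (isCoboundedUnder_le_of_le atTop fun n => hν.1.nonneg (hA n)) ?_
  filter_upwards [eventually_ge_atTop k] with n hn
  exact hν.1.mono (hA n) (hC k) (hAC k n hn)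

lemma IsContinuousCapacity.tendsto_of_continuousAt (hν : IsContinuousCapacity m ν)
    {Xn : ℕ → Ω → ℝ} {X : Ω → ℝ} (hXn : ∀ n, Measurable (Xn n)) (hX : Measurable X)
    (hlim : ∀ ω, Tendsto (fun n => Xn n ω) atTop (𝓝 (X ω))) {x : ℝ}
    (hx : ContinuousAt (fun y => ν {ω | y < X ω}) x) :
    Tendsto (fun n => ν {ω | x < Xn n ω}) atTop (𝓝 (ν {ω | x < X ω})) := by
  have hm : ∀ n, MeasurableSet {ω | x < Xn n ω} := fun n => hXn n measurableSet_Ioi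
  have hlower : ν {ω | x < X ω} ≤ liminf (fun n => ν {ω | x < Xn n ω}) atTop := by
    refine (hν.1.mono (hX measurableSet_Ioi) (.measurableSet_liminf hm) fun ω hω => ?_).trans
      (hν.le_liminf hm)
    exact mem_liminf_iff_eventually_mem.2 ((hlim ω).eventually_const_lt hω)
  have hupper_of_lt : ∀ y < x, limsup (fun n => ν {ω | x < Xn n ω}) atTop ≤ ν {ω | y < X ω} := by
    refine fun y hy => (hν.limsup_le hm).trans
      (hν.1.mono (.measurableSet_limsup hm) (hX measurableSet_Ioi) fun ω hω => ?_)
    by_contra hXy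
    have hsmall := (hlim ω).eventually_lt_const ((not_lt.1 hXy).trans_lt hy)
    obtain ⟨n, hn, hn'⟩ := ((mem_limsup_iff_frequently_mem.1 hω).and_eventually hsmall).exists
    exact lt_asymm hn hn'
  have hupper : limsup (fun n => ν {ω | x < Xn n ω}) atTop ≤ ν {ω | x < X ω} :=
    ge_of_tendsto (hx.tendsto.mono_left (nhdsWithin_le_nhds (s := Iio x)))
      (eventually_nhdsWithin_of_forall hupper_of_lt)
  exact tendsto_of_le_liminf_of_limsup_le hlower hupper
    (isBoundedUnder_of ⟨1, fun n => hν.1.le_one (hm n)⟩)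
    (isBoundedUnder_of ⟨0, fun n => hν.1.nonneg (hm n)⟩)

end Capacity

section Ramp

/-- The term `ε * (t - x - ε)` makes `ramp x ε` strictly increasing without moving the point
`x + ε` where it crosses `1/2`. -/
def ramp (x ε t : ℝ) : ℝ :=
  max 0 (min 1 ((t - x) / (2 * ε))) + ε * (t - x - ε)

variable {x ε : ℝ}

lemma ramp_strictMono (hε : 0 < ε) : StrictMono (ramp x ε) := fun s t hst => by
  have hclamp : (s - x) / (2 * ε) ≤ (t - x) / (2 * ε) := by gcongr
  exact add_lt_add_of_le_of_lt (max_le_max le_rfl (min_le_min le_rfl hclamp))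
    (by gcongr)

lemma continuous_ramp : Continuous (ramp x ε) := by
  unfold ramp
  fun_prop

lemma ramp_add_self (hε : 0 < ε) : ramp x ε (x + ε) = 1 / 2 := by
  have : (x + ε - x) / (2 * ε) = 1 / 2 := by field_simp; ring
  simp only [ramp, this]
  norm_num

lemma abs_ramp_le (hε₀ : 0 ≤ ε) (hε₁ : ε ≤ 1) (t : ℝ) : |ramp x ε t| ≤ 2 + |t| + |x| := by
  have hclamp : |max 0 (min 1 ((t - x) / (2 * ε)))| ≤ 1 :=
    abs_le.2 ⟨by linarith [le_max_left 0 (min 1 ((t - x) / (2 * ε)))],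
      max_le zero_le_one (min_le_left _ _)⟩
  have hlin : |ε * (t - x - ε)| ≤ |t| + |x| + 1 := by
    rw [abs_mul, abs_of_nonneg hε₀]
    calc ε * |t - x - ε| ≤ 1 * |t - x - ε| := by gcongr
      _ ≤ |t - x| + |ε| := by rw [one_mul]; exact abs_sub _ _
      _ ≤ |t| + |x| + 1 := add_le_add (abs_sub _ _) (by rwa [abs_of_nonneg hε₀])
  exact (abs_add_le _ _).trans (by linarith)

lemma tendsto_ramp (t : ℝ) :
    Tendsto (fun ε => ramp x ε t) (𝓝[>] 0) (𝓝 (if x < t then 1 else 0)) := by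
  have hlin : Tendsto (fun ε => ε * (t - x - ε)) (𝓝[>] 0) (𝓝 0) := by
    have : Tendsto (fun ε : ℝ => ε * (t - x - ε)) (𝓝 0) (𝓝 (0 * (t - x - 0))) :=
      (continuous_id.mul (continuous_const.sub continuous_id)).tendsto 0
    simpa using this.mono_left nhdsWithin_le_nhds
  have hclamp : ∀ᶠ ε in 𝓝[>] 0,
      max 0 (min 1 ((t - x) / (2 * ε))) = if x < t then (1 : ℝ) else 0 := by
    split_ifs with hxt
    · filter_upwards [Ioo_mem_nhdsGT (show (0 : ℝ) < (t - x) / 2 by linarith)] with ε hε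
      have : 1 ≤ (t - x) / (2 * ε) := by
        rw [le_div_iff₀ (by linarith [hε.1])]
        linarith [hε.2]
      simp [min_eq_left this]
    · filter_upwards [self_mem_nhdsWithin] with ε (hε : 0 < ε)
      have : (t - x) / (2 * ε) ≤ 0 := div_nonpos_of_nonpos_of_nonneg (by linarith) (by linarith)
      simp [min_eq_right (this.trans zero_le_one), this]
  simpa [ramp] using (tendsto_const_nhds.congr' (hclamp.mono fun ε h => h.symm)).add hlin

end Ramp

section ActToDistribution

variable {Ω : Type*}

def FSDMonotone (F : MeasurableSpace Ω) (D : (Ω → ℝ) → Measure ℝ) : Prop :=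
  ∀ X Y : Ω → ℝ, BddMeas F X → BddMeas F Y → (∀ ω, Y ω ≤ X ω) → FSDle (D Y) (D X)

def BddPointwiseContinuous (F : MeasurableSpace Ω) (D : (Ω → ℝ) → Measure ℝ) : Prop :=
  ∀ (Xn : ℕ → Ω → ℝ) (X : Ω → ℝ), (∀ n, BddMeas F (Xn n)) → BddMeas F X →
    (∃ M : ℝ, ∀ n ω, |Xn n ω| ≤ M) → (∀ ω, Tendsto (fun n => Xn n ω) atTop (𝓝 (X ω))) →
    WeakConv (fun n => D (Xn n)) (D X)

def MapEquivariant (F : MeasurableSpace Ω) (D : (Ω → ℝ) → Measure ℝ) : Prop :=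
  ∀ u : ℝ → ℝ, StrictMono u → Continuous u → ∀ X : Ω → ℝ, BddMeas F X →
    D (fun ω => u (X ω)) = Measure.map u (D X)

def capacityOf (D : (Ω → ℝ) → Measure ℝ) (A : Set Ω) : ℝ :=
  (D (ind A) (Ioi (1 / 2))).toReal

lemma abs_ind_le_one (A : Set Ω) (ω : Ω) : |ind A ω| ≤ 1 := by
  by_cases h : ω ∈ A <;> simp [ind, h]

lemma Monotone.eventually_mem_iff_mem_iUnion {A : ℕ → Set Ω} (hA : Monotone A) (ω : Ω) :
    ∀ᶠ n in atTop, (ω ∈ A n ↔ ω ∈ ⋃ k, A k) := by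
  by_cases h : ω ∈ ⋃ k, A k
  · obtain ⟨k, hk⟩ := mem_iUnion.1 h
    filter_upwards [eventually_ge_atTop k] with n hn
    exact iff_of_true (hA hn hk) h
  · exact .of_forall fun n => iff_of_false (fun hn => h (mem_iUnion_of_mem n hn)) h

lemma Antitone.eventually_mem_iff_mem_iInter {A : ℕ → Set Ω} (hA : Antitone A) (ω : Ω) :
    ∀ᶠ n in atTop, (ω ∈ A n ↔ ω ∈ ⋂ k, A k) := by
  by_cases h : ω ∈ ⋂ k, A k
  · exact .of_forall fun n => iff_of_true (mem_iInter.1 h n) h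
  · obtain ⟨k, hk⟩ : ∃ k, ω ∉ A k := by simpa using h
    filter_upwards [eventually_ge_atTop k] with n hn
    exact iff_of_false (fun hn' => hk (hA hn hn')) h

variable [F : MeasurableSpace Ω] {D : (Ω → ℝ) → Measure ℝ}

lemma bddMeas_ind {A : Set Ω} (hA : MeasurableSet A) : BddMeas F (ind A) :=
  ⟨measurable_const.indicator hA, 1, abs_ind_le_one A⟩

lemma bddMeas_const (c : ℝ) : BddMeas F (fun _ : Ω => c) :=
  ⟨measurable_const, |c|, fun _ => le_rfl⟩

lemma BddMeas.comp_continuous {X : Ω → ℝ} (hX : BddMeas F X) {u : ℝ → ℝ} (hu : Continuous u) :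
    BddMeas F (fun ω => u (X ω)) := by
  obtain ⟨hXm, M, hM⟩ := hX
  obtain ⟨C, hC⟩ := (isCompact_Icc (a := -M) (b := M)).exists_bound_of_continuousOn hu.continuousOn
  exact ⟨hu.measurable.comp hXm, C, fun ω => by simpa using hC (X ω) (abs_le.1 (hM ω))⟩

lemma measure_ind_singleton_half (hD : ∀ X, BddMeas F X → IsDistribution (D X))
    (hR3 : MapEquivariant F D) {A : Set Ω} (hA : MeasurableSet A) :
    D (ind A) {1 / 2} = 0 := by
  have := (hD _ (bddMeas_ind hA)).1
  set u : ℝ → ℝ := fun t => max (t / 3) (3 * t - 2)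
  have hu : StrictMono u := fun a b h => max_lt_max (by linarith) (by linarith)
  have hc : Continuous u := by fun_prop
  have hfix : (fun ω => u (ind A ω)) = ind A :=
    funext fun ω => by by_cases h : ω ∈ A <;> norm_num [u, ind, h]
  have hinv : (D (ind A)).map u = D (ind A) := by rw [← hR3 u hu hc _ (bddMeas_ind hA), hfix]
  have h34 : D (ind A) (Ioi (1 / 4)) = D (ind A) (Ioi (3 / 4)) := by
    have := map_apply_Ioi_of_strictMono (D (ind A)) hu hc (3 / 4)
    rwa [hinv, show u (3 / 4) = 1 / 4 by norm_num [u]] at this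
  refine measure_mono_null (t := Ioi (1 / 4) \ Ioi (3 / 4)) (by norm_num) ?_
  rw [measure_sdiff (Ioi_subset_Ioi (by norm_num)) measurableSet_Ioi.nullMeasurableSet
    (measure_ne_top _ _), h34, tsub_self]

/-- Approximate the indicator of `{x < X}` by `ramp x ε ∘ X`, whose law has at `1/2` the
survival value of `D X` at `x + ε`. -/
lemma toReal_measure_Ioi_eq_capacityOf (hD : ∀ X, BddMeas F X → IsDistribution (D X))
    (hR2 : BddPointwiseContinuous F D) (hR3 : MapEquivariant F D) {X : Ω → ℝ}
    (hX : BddMeas F X) (x : ℝ) :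
    (D X (Ioi x)).toReal = capacityOf D {ω | x < X ω} := by
  set A := {ω | x < X ω}
  have hA : MeasurableSet A := hX.1 measurableSet_Ioi
  set ε : ℕ → ℝ := fun n => 1 / (n + 1)
  have hε : ∀ n, 0 < ε n := fun n => by positivity
  have hε_le : ∀ n, ε n ≤ 1 := fun n => div_le_one_of_le₀ (by simp) (by positivity)
  have hε_lim : Tendsto ε atTop (𝓝[>] 0) :=
    tendsto_nhdsWithin_iff.2 ⟨tendsto_one_div_add_atTop_nhds_zero_nat, .of_forall hε⟩
  set Xn : ℕ → Ω → ℝ := fun n ω => ramp x (ε n) (X ω)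
  have hXn : ∀ n, BddMeas F (Xn n) := fun n => hX.comp_continuous continuous_ramp
  have := fun n => (hD _ (hXn n)).1
  have := (hD _ (bddMeas_ind hA)).1
  have hw : WeakConv (fun n => D (Xn n)) (D (ind A)) := by
    obtain ⟨-, M, hM⟩ := hX
    refine hR2 Xn (ind A) hXn (bddMeas_ind hA) ⟨2 + M + |x|, fun n ω =>
      (abs_ramp_le (hε n).le (hε_le n) _).trans (by linarith [hM ω])⟩ fun ω => ?_
    have hind : ind A ω = if x < X ω then 1 else 0 := by simp [ind, A, indicator]
    exact hind ▸ (tendsto_ramp (X ω)).comp hε_lim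
  have hshift : ∀ n, D (Xn n) (Ioi (1 / 2)) = D X (Ioi (x + ε n)) := fun n => by
    have := map_apply_Ioi_of_strictMono (D X) (ramp_strictMono (x := x) (hε n)) continuous_ramp
      (x + ε n)
    rwa [ramp_add_self (hε n), ← hR3 _ (ramp_strictMono (hε n)) continuous_ramp X hX] at this
  have hlim := hw.tendsto_measure_Ioi (measure_ind_singleton_half hD hR3 hA)
  simp only [hshift] at hlim
  exact congrArg ENNReal.toReal (tendsto_nhds_unique (tendsto_measure_Ioi_add_one_div _ x) hlim)

lemma capacityOf_empty (hD : ∀ X, BddMeas F X → IsDistribution (D X))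
    (hR2 : BddPointwiseContinuous F D) (hR3 : MapEquivariant F D) :
    capacityOf D (∅ : Set Ω) = 0 := by
  obtain ⟨x, hx, hx0⟩ := ((eventually_ge_atTop 0).and
    (hD _ (bddMeas_const 0)).eventually_measure_Ioi_eq_zero).exists
  simpa [hx0, not_lt.2 hx] using
    (toReal_measure_Ioi_eq_capacityOf hD hR2 hR3 (bddMeas_const (0 : ℝ)) x).symm

lemma capacityOf_univ (hD : ∀ X, BddMeas F X → IsDistribution (D X))
    (hR2 : BddPointwiseContinuous F D) (hR3 : MapEquivariant F D) :
    capacityOf D (univ : Set Ω) = 1 := by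
  obtain ⟨x, hx, hx1⟩ := ((eventually_lt_atBot 0).and
    (hD _ (bddMeas_const 0)).eventually_measure_Ioi_eq_one).exists
  simpa [hx1, hx] using
    (toReal_measure_Ioi_eq_capacityOf hD hR2 hR3 (bddMeas_const (0 : ℝ)) x).symm

lemma tendsto_capacityOf (hD : ∀ X, BddMeas F X → IsDistribution (D X))
    (hR2 : BddPointwiseContinuous F D) (hR3 : MapEquivariant F D) {A : ℕ → Set Ω} {B : Set Ω}
    (hA : ∀ n, MeasurableSet (A n)) (hB : MeasurableSet B)
    (hAB : ∀ ω, ∀ᶠ n in atTop, (ω ∈ A n ↔ ω ∈ B)) :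
    Tendsto (fun n => capacityOf D (A n)) atTop (𝓝 (capacityOf D B)) := by
  have := fun n => (hD _ (bddMeas_ind (hA n))).1
  have := (hD _ (bddMeas_ind hB)).1
  have hw : WeakConv (fun n => D (ind (A n))) (D (ind B)) :=
    hR2 _ _ (fun n => bddMeas_ind (hA n)) (bddMeas_ind hB) ⟨1, fun n => abs_ind_le_one (A n)⟩
      fun ω => (tendsto_indicator_const_apply_iff_eventually _ _ _).2 (hAB ω)
  exact (ENNReal.tendsto_toReal (measure_ne_top _ _)).comp
    (hw.tendsto_measure_Ioi (measure_ind_singleton_half hD hR3 hB))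

lemma isContinuousCapacity_capacityOf (hD : ∀ X, BddMeas F X → IsDistribution (D X))
    (hR1 : FSDMonotone F D) (hR2 : BddPointwiseContinuous F D) (hR3 : MapEquivariant F D) :
    IsContinuousCapacity F (capacityOf D) := by
  refine ⟨⟨capacityOf_empty hD hR2 hR3, capacityOf_univ hD hR2 hR3, fun A B hA hB hAB => ?_⟩,
    fun A hA hmono => ?_, fun A hA hanti => ?_⟩
  · have := (hD _ (bddMeas_ind hB)).1
    exact ENNReal.toReal_mono (measure_ne_top _ _) (hR1 _ _ (bddMeas_ind hB) (bddMeas_ind hA)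
      (indicator_le_indicator_of_subset hAB fun _ => zero_le_one) _)
  · exact tendsto_capacityOf hD hR2 hR3 hA (.iUnion hA) hmono.eventually_mem_iff_mem_iUnion
  · exact tendsto_capacityOf hD hR2 hR3 hA (.iInter hA) hanti.eventually_mem_iff_mem_iInter

end ActToDistribution

section ChoquetRepresentation

variable {Ω : Type*} [F : MeasurableSpace Ω] {ν : Set Ω → ℝ} {D : (Ω → ℝ) → Measure ℝ}

lemma IsChoquetATD.fsdMonotone (hν : IsCapacity F ν) (hD : IsChoquetATD F ν D) :
    FSDMonotone F D := by
  intro X Y hX hY hYX x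
  have := (hD X hX).1.1
  have := (hD Y hY).1.1
  rw [← ENNReal.toReal_le_toReal (measure_ne_top _ _) (measure_ne_top _ _), (hD Y hY).2,
    (hD X hX).2]
  exact hν.mono (hY.1 measurableSet_Ioi) (hX.1 measurableSet_Ioi) fun ω h => h.trans_le (hYX ω)

lemma IsChoquetATD.bddPointwiseContinuous (hν : IsContinuousCapacity F ν)
    (hD : IsChoquetATD F ν D) : BddPointwiseContinuous F D := by
  intro Xn X hXn hX _ hlim
  have := (hD X hX).1.1
  have := fun n => (hD _ (hXn n)).1.1
  refine weakConv_of_tendsto_measureReal_Ioi fun x hx => ?_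
  have hsurv : ∀ {Y}, BddMeas F Y → ∀ x, (D Y).real (Ioi x) = ν {ω | x < Y ω} :=
    fun hY x => (hD _ hY).2 x
  simp only [hsurv (hXn _), hsurv hX] at hx ⊢
  exact hν.tendsto_of_continuousAt (fun n => (hXn n).1) hX.1 hlim hx

lemma IsChoquetATD.toReal_measure_eq_of_empty_or_univ_or_Ioi (hν : IsCapacity F ν)
    (hD : IsChoquetATD F ν D) {X : Ω → ℝ} (hX : BddMeas F X) {S : Set ℝ}
    (hS : S = ∅ ∨ S = univ ∨ ∃ c, S = Ioi c) : (D X S).toReal = ν (X ⁻¹' S) := by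
  have := (hD X hX).1.1
  rcases hS with rfl | rfl | ⟨c, rfl⟩
  · simp [hν.1]
  · simp [hν.2.1]
  · exact (hD X hX).2 c

lemma IsChoquetATD.mapEquivariant (hν : IsCapacity F ν) (hD : IsChoquetATD F ν D) :
    MapEquivariant F D := by
  intro u hu hc X hX
  have hY := hX.comp_continuous hc
  have := (hD X hX).1.1
  have := (hD _ hY).1.1
  have := Measure.isProbabilityMeasure_map (μ := D X) hc.aemeasurable
  refine ext_of_measure_Ioi fun y => (ENNReal.toReal_eq_toReal_iff' (measure_ne_top _ _)
    (measure_ne_top _ _)).1 ?_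
  rw [(hD _ hY).2, Measure.map_apply hc.measurable measurableSet_Ioi,
    hD.toReal_measure_eq_of_empty_or_univ_or_Ioi hν hX
      (preimage_Ioi_eq_empty_or_univ_or_Ioi hu hc y)]
  rfl

end ChoquetRepresentation

/-- characterization of Choquet act-to-distribution mappings
(Theorem `theo:riskEq`): `D` satisfies (R1)-(R3) iff `D` is given by a
continuous capacity via survival functions. -/
theorem stmt0 {Ω : Type*} [F : MeasurableSpace Ω] (D : (Ω → ℝ) → Measure ℝ)
    (hD : ∀ X : Ω → ℝ, BddMeas F X → IsDistribution (D X)) :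
    ((∀ X Y : Ω → ℝ, BddMeas F X → BddMeas F Y → (∀ ω, Y ω ≤ X ω) → FSDle (D Y) (D X)) ∧
     (∀ (Xn : ℕ → Ω → ℝ) (X : Ω → ℝ), (∀ n, BddMeas F (Xn n)) → BddMeas F X →
        (∃ M : ℝ, ∀ n ω, |Xn n ω| ≤ M) →
        (∀ ω, Filter.Tendsto (fun n => Xn n ω) Filter.atTop (nhds (X ω))) →
        WeakConv (fun n => D (Xn n)) (D X)) ∧
     (∀ u : ℝ → ℝ, StrictMono u → Continuous u → ∀ X : Ω → ℝ, BddMeas F X →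
        D (fun ω => u (X ω)) = Measure.map u (D X))) ↔
    (∃ ν : Set Ω → ℝ, IsContinuousCapacity F ν ∧
       ∀ X : Ω → ℝ, BddMeas F X → ∀ x : ℝ, (D X (Set.Ioi x)).toReal = ν {ω | x < X ω}) := by
  constructor
  · rintro ⟨hR1, hR2, hR3⟩
    exact ⟨capacityOf D, isContinuousCapacity_capacityOf hD hR1 hR2 hR3,
      fun X hX => toReal_measure_Ioi_eq_capacityOf hD hR2 hR3 hX⟩
  · rintro ⟨ν, hν, hsurv⟩
    have hChoquet : IsChoquetATD F ν D := fun X hX => ⟨hD X hX, hsurv X hX⟩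
    exact ⟨hChoquet.fsdMonotone hν.1, hChoquet.bddPointwiseContinuous hν,
      hChoquet.mapEquivariant hν.1⟩

end
end

section
/- For every statistic γ there exists a unique certainty-equivalent statistic γ' such that for all distributions Q, P: γ(Q) ≥ γ(P) if and only if γ'(Q) ≥ γ'(P). In particular, two certainty-equivalent statistics that induce the same total preorder on distributions are equal. -/
open MeasureTheory Filter Topology

noncomputable section

/-! Every value of a statistic is attained on a Dirac measure: a distribution supported in
`[a, b]` lies between `δ_a` and `δ_b` in the fsd order, and `c ↦ γ(δ_c)` is continuous and
strictly increasing, so the intermediate value theorem applies. Composing `γ` with the inverse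
of `c ↦ γ(δ_c)` gives the certainty-equivalent statistic. Uniqueness holds because a
certainty-equivalent statistic with value `c` at `Q` ranks `Q` level with `δ_c`. -/

lemma fsdle_dirac_left {Q : Measure ℝ} {a b : ℝ} (h : Q (Set.Icc a b) = 1) :
    FSDle (Measure.dirac a) Q := by
  intro x
  by_cases hx : x < a
  · rw [Measure.dirac_apply_of_mem (show a ∈ Set.Ioi x from hx), ← h]
    exact measure_mono fun y hy => hx.trans_le hy.1
  · rw [Measure.dirac_apply' _ measurableSet_Ioi, Set.indicator_of_notMem (by simpa using hx)]
    exact zero_le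

lemma fsdle_dirac_right {Q : Measure ℝ} [IsProbabilityMeasure Q] {a b : ℝ}
    (h : Q (Set.Icc a b) = 1) : FSDle Q (Measure.dirac b) := by
  intro x
  by_cases hx : x < b
  · rw [Measure.dirac_apply_of_mem (show b ∈ Set.Ioi x from hx)]
    exact prob_le_one
  · have hout : Q (Set.Icc a b)ᶜ = 0 := (prob_compl_eq_zero_iff measurableSet_Icc).2 h
    have hsub : Set.Ioi x ⊆ (Set.Icc a b)ᶜ := fun y hy hy' => hx (hy.trans_le hy'.2)
    have hIoi : Q (Set.Ioi x) = 0 := measure_mono_null hsub hout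
    rw [hIoi]
    exact zero_le

lemma isDistribution_dirac (c : ℝ) : IsDistribution (Measure.dirac c) :=
  ⟨inferInstance, c, c, Measure.dirac_apply_of_mem (by simp)⟩

def certaintyEquiv (γ : Measure ℝ → ℝ) (Q : Measure ℝ) : ℝ :=
  Function.invFun (fun c => γ (Measure.dirac c)) (γ Q)

lemma eq_of_dirac_eq_of_le_iff {γ₁ γ₂ : Measure ℝ → ℝ}
    (h₁ : ∀ c, γ₁ (Measure.dirac c) = c) (h₂ : ∀ c, γ₂ (Measure.dirac c) = c)
    (hle : ∀ Q P, IsDistribution Q → IsDistribution P → (γ₁ P ≤ γ₁ Q ↔ γ₂ P ≤ γ₂ Q))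
    {Q : Measure ℝ} (hQ : IsDistribution Q) : γ₁ Q = γ₂ Q := by
  have hδ := isDistribution_dirac (γ₁ Q)
  have hup : γ₂ Q ≤ γ₁ Q := h₂ (γ₁ Q) ▸ (hle _ Q hδ hQ).1 (h₁ (γ₁ Q)).ge
  have hdown : γ₁ Q ≤ γ₂ Q := h₂ (γ₁ Q) ▸ (hle Q _ hQ hδ).1 (h₁ (γ₁ Q)).le
  exact le_antisymm hdown hup

lemma IsStatistic.of_strictMono_comp {γ γ' : Measure ℝ → ℝ} {g : ℝ → ℝ}
    (hγ : IsStatistic γ) (hg : StrictMono g) (hg' : Topology.IsInducing g)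
    (hcomp : ∀ Q, IsDistribution Q → g (γ' Q) = γ Q) : IsStatistic γ' := by
  refine ⟨fun Q P hQ hP hPQ => ?_, fun Q P hQ hP hPQ hne => ?_,
    fun Qn Q hQn hQ hbdd hconv => ?_⟩
  · rw [← hg.le_iff_le, hcomp Q hQ, hcomp P hP]
    exact hγ.1 Q P hQ hP hPQ
  · rw [← hg.lt_iff_lt, hcomp Q hQ, hcomp P hP]
    exact hγ.2.1 Q P hQ hP hPQ hne
  · rw [hg'.tendsto_nhds_iff, hcomp Q hQ]
    simpa only [Function.comp_def, hcomp _ (hQn _)] using hγ.2.2 Qn Q hQn hQ hbdd hconv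

namespace IsStatistic

variable {γ : Measure ℝ → ℝ}

lemma strictMono_dirac (hγ : IsStatistic γ) : StrictMono fun c => γ (Measure.dirac c) :=
  fun a b hab => hγ.2.1 _ _ (isDistribution_dirac b) (isDistribution_dirac a)
    (fsdle_dirac_left (Measure.dirac_apply_of_mem (show b ∈ Set.Icc a b from ⟨hab.le, le_rfl⟩)))
    (dirac_ne_dirac hab.ne')

lemma continuous_dirac (hγ : IsStatistic γ) : Continuous fun c => γ (Measure.dirac c) := by
  refine continuous_iff_seqContinuous.2 fun u x hu => ?_
  obtain ⟨a, b, hab⟩ := bddBelow_bddAbove_iff_subset_Icc.1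
    (isBounded_iff_bddBelow_bddAbove.1 (Metric.isBounded_range_of_tendsto u hu))
  refine hγ.2.2 _ _ (fun n => isDistribution_dirac _) (isDistribution_dirac x)
    ⟨a, b, fun n => Measure.dirac_apply_of_mem (hab (Set.mem_range_self n))⟩ fun f => ?_
  simpa [integral_dirac, Function.comp_def] using (f.continuous.tendsto x).comp hu

lemma isInducing_dirac (hγ : IsStatistic γ) :
    Topology.IsInducing fun c => γ (Measure.dirac c) :=
  (hγ.strictMono_dirac.isEmbedding_of_ordConnected
    (isPreconnected_range hγ.continuous_dirac).ordConnected).isInducing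

lemma exists_dirac_eq (hγ : IsStatistic γ) {Q : Measure ℝ} (hQ : IsDistribution Q) :
    ∃ c, γ (Measure.dirac c) = γ Q := by
  obtain ⟨hprob, a, b, hab⟩ := hQ
  have hlow : γ (Measure.dirac a) ≤ γ Q :=
    hγ.1 _ _ ⟨hprob, a, b, hab⟩ (isDistribution_dirac a) (fsdle_dirac_left hab)
  have hhigh : γ Q ≤ γ (Measure.dirac b) :=
    hγ.1 _ _ (isDistribution_dirac b) ⟨hprob, a, b, hab⟩ (fsdle_dirac_right hab)
  obtain ⟨c, -, hc⟩ := intermediate_value_uIcc hγ.continuous_dirac.continuousOn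
    (Set.mem_uIcc_of_le hlow hhigh)
  exact ⟨c, hc⟩

lemma apply_dirac_certaintyEquiv (hγ : IsStatistic γ) {Q : Measure ℝ} (hQ : IsDistribution Q) :
    γ (Measure.dirac (certaintyEquiv γ Q)) = γ Q :=
  Function.invFun_eq (hγ.exists_dirac_eq hQ)

lemma certaintyEquiv_le_iff (hγ : IsStatistic γ) {Q P : Measure ℝ} (hQ : IsDistribution Q)
    (hP : IsDistribution P) : γ P ≤ γ Q ↔ certaintyEquiv γ P ≤ certaintyEquiv γ Q := by
  rw [← hγ.apply_dirac_certaintyEquiv hQ, ← hγ.apply_dirac_certaintyEquiv hP]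
  exact hγ.strictMono_dirac.le_iff_le

lemma isCEStatistic_certaintyEquiv (hγ : IsStatistic γ) : IsCEStatistic (certaintyEquiv γ) :=
  ⟨hγ.of_strictMono_comp hγ.strictMono_dirac hγ.isInducing_dirac
      fun _ => hγ.apply_dirac_certaintyEquiv,
    fun c => hγ.strictMono_dirac.injective
      (hγ.apply_dirac_certaintyEquiv (isDistribution_dirac c))⟩

end IsStatistic

/-- for every statistic there is a unique certainty-equivalent
statistic inducing the same preorder on distributions; in particular two
certainty-equivalent statistics inducing the same preorder coincide
(Proposition `prop:riskfun`). -/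
theorem stmt6 (γ : Measure ℝ → ℝ) (hγ : IsStatistic γ) :
    (∃ γ' : Measure ℝ → ℝ, IsCEStatistic γ' ∧
      (∀ Q P : Measure ℝ, IsDistribution Q → IsDistribution P →
        (γ P ≤ γ Q ↔ γ' P ≤ γ' Q)) ∧
      (∀ γ'' : Measure ℝ → ℝ, IsCEStatistic γ'' →
        (∀ Q P : Measure ℝ, IsDistribution Q → IsDistribution P →
          (γ P ≤ γ Q ↔ γ'' P ≤ γ'' Q)) →
        ∀ Q : Measure ℝ, IsDistribution Q → γ'' Q = γ' Q)) ∧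
    (∀ γ₁ γ₂ : Measure ℝ → ℝ, IsCEStatistic γ₁ → IsCEStatistic γ₂ →
      (∀ Q P : Measure ℝ, IsDistribution Q → IsDistribution P →
        (γ₁ P ≤ γ₁ Q ↔ γ₂ P ≤ γ₂ Q)) →
      ∀ Q : Measure ℝ, IsDistribution Q → γ₁ Q = γ₂ Q) := by
  have hle : ∀ Q P, IsDistribution Q → IsDistribution P →
      (γ P ≤ γ Q ↔ certaintyEquiv γ P ≤ certaintyEquiv γ Q) :=
    fun _ _ hQ hP => hγ.certaintyEquiv_le_iff hQ hP
  refine ⟨⟨certaintyEquiv γ, hγ.isCEStatistic_certaintyEquiv, hle, ?_⟩, ?_⟩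
  · intro γ'' hγ'' hle'' Q hQ
    exact eq_of_dirac_eq_of_le_iff hγ''.2 hγ.isCEStatistic_certaintyEquiv.2
      (fun Q P hQ hP => (hle'' Q P hQ hP).symm.trans (hle Q P hQ hP)) hQ
  · intro γ₁ γ₂ hγ₁ hγ₂ hle₁₂ Q hQ
    exact eq_of_dirac_eq_of_le_iff hγ₁.2 hγ₂.2 hle₁₂ hQ

end
end

section
/- Let (Δ, Σ) be a measurable space and let ≿ be a total preorder on the set of bounded Σ-measurable functions η : Δ → ℝ satisfying: (M1) η ≥ ζ pointwise implies η ≿ ζ; (M2) for every η, the sets {c ∈ ℝ : η ≿ c} and {c ∈ ℝ : c ≿ η} are closed in ℝ, where a real c is identified with the constant function equal to c; (M3) for reals a > b, a ≻ b. Then there exists a function ρ from the bounded Σ-measurable functions to ℝ such that: ρ(η) ≥ ρ(ζ) whenever η ≥ ζ pointwise; ρ(a) > ρ(b) whenever a > b in ℝ; and for all η, ζ: η ≿ ζ ⇔ ρ(η) ≥ ρ(ζ). -/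
open MeasureTheory Filter Topology

noncomputable section

/-!
Every act `η` has a certainty equivalent: the reals `t` with `t ≿ η` and those with `η ≿ t`
form two closed sets (M2) covering `ℝ` (totality), each nonempty because `η` lies between two
constants (boundedness and M1), so by connectedness of `ℝ` they meet. Taking `ρ η` to be such a
real, (M1) and (M3) order the constants as the reals, and transitivity through the certainty
equivalents gives `η ≿ ζ ↔ ρ ζ ≤ ρ η`.
-/

section CertaintyEquivalent

variable {α : Type*} {S : α → Prop} {r : α → α → Prop} {c : ℝ → α}

theorem exists_certaintyEquivalent (htotal : ∀ x y, S x → S y → r x y ∨ r y x)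
    (hc : ∀ t, S (c t)) {x : α} (hx : S x)
    (hlower : IsClosed {t | r x (c t)}) (hupper : IsClosed {t | r (c t) x})
    (hbddBelow : ∃ t, r x (c t)) (hbddAbove : ∃ t, r (c t) x) :
    ∃ t, r x (c t) ∧ r (c t) x := by
  obtain ⟨t, -, ht⟩ := isPreconnected_closed_iff.1 isPreconnected_univ _ _ hlower hupper
    (fun t _ => htotal x (c t) hx (hc t)) (by rwa [Set.univ_inter]) (by rwa [Set.univ_inter])
  exact ⟨t, ht⟩

variable {ρ : α → ℝ}

theorem certaintyEquivalent_const (hcr : ∀ a b, r (c a) (c b) ↔ b ≤ a)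
    (hρ : ∀ x, S x → r x (c (ρ x)) ∧ r (c (ρ x)) x) (hc : ∀ t, S (c t)) (t : ℝ) :
    ρ (c t) = t :=
  le_antisymm ((hcr _ _).1 (hρ _ (hc t)).1) ((hcr _ _).1 (hρ _ (hc t)).2)

theorem pref_iff_certaintyEquivalent_le
    (htrans : ∀ x y z, S x → S y → S z → r x y → r y z → r x z)
    (hcr : ∀ a b, r (c a) (c b) ↔ b ≤ a) (hρ : ∀ x, S x → r x (c (ρ x)) ∧ r (c (ρ x)) x)
    (hc : ∀ t, S (c t)) {x y : α} (hx : S x) (hy : S y) :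
    r x y ↔ ρ y ≤ ρ x := by
  constructor
  · intro hxy
    have hxy' : r x (c (ρ y)) := htrans _ _ _ hx hy (hc _) hxy (hρ y hy).1
    exact (hcr _ _).1 (htrans _ _ _ (hc _) hx (hc _) (hρ x hx).2 hxy')
  · intro hle
    have hxy' : r x (c (ρ y)) := htrans _ _ _ hx (hc _) (hc _) (hρ x hx).1 ((hcr _ _).2 hle)
    exact htrans _ _ _ hx (hc _) hy hxy' (hρ y hy).2

end CertaintyEquivalent

section BoundedActs

variable {Δ : Type*} {Sm : MeasurableSpace Δ} {pref : (Δ → ℝ) → (Δ → ℝ) → Prop}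

theorem bddMeas_const_s7 (t : ℝ) : BddMeas Sm fun _ : Δ => t :=
  ⟨measurable_const, |t|, fun _ => le_rfl⟩

theorem exists_const_pref_and_pref_const
    (hM1 : ∀ η ζ : Δ → ℝ, BddMeas Sm η → BddMeas Sm ζ → (∀ s, ζ s ≤ η s) → pref η ζ)
    {η : Δ → ℝ} (hη : BddMeas Sm η) :
    (∃ t, pref η fun _ => t) ∧ ∃ t, pref (fun _ => t) η := by
  obtain ⟨M, hM⟩ := hη.2
  exact ⟨⟨-M, hM1 _ _ hη (bddMeas_const_s7 _) fun s => (abs_le.1 (hM s)).1⟩,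
    ⟨M, hM1 _ _ (bddMeas_const_s7 _) hη fun s => (abs_le.1 (hM s)).2⟩⟩

theorem const_pref_const_iff
    (hM1 : ∀ η ζ : Δ → ℝ, BddMeas Sm η → BddMeas Sm ζ → (∀ s, ζ s ≤ η s) → pref η ζ)
    (hM3 : ∀ a b : ℝ, b < a →
      pref (fun _ => a) (fun _ => b) ∧ ¬ pref (fun _ => b) (fun _ => a))
    (a b : ℝ) : pref (fun _ => a) (fun _ => b) ↔ b ≤ a :=
  ⟨fun h => not_lt.1 fun hab => (hM3 b a hab).2 h,
    fun hba => hM1 _ _ (bddMeas_const_s7 a) (bddMeas_const_s7 b) fun _ => hba⟩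

end BoundedActs

/-- numerical representation of a monotone continuous preference
over bounded measurable (model-based) acts (Proposition `prop:labelGood1`). -/
theorem stmt7 {Δ : Type*} [Sm : MeasurableSpace Δ] (pref : (Δ → ℝ) → (Δ → ℝ) → Prop)
    (htotal : ∀ η ζ : Δ → ℝ, BddMeas Sm η → BddMeas Sm ζ → pref η ζ ∨ pref ζ η)
    (htrans : ∀ η ζ ξ : Δ → ℝ, BddMeas Sm η → BddMeas Sm ζ → BddMeas Sm ξ →
      pref η ζ → pref ζ ξ → pref η ξ)
    (hM1 : ∀ η ζ : Δ → ℝ, BddMeas Sm η → BddMeas Sm ζ → (∀ s, ζ s ≤ η s) → pref η ζ)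
    (hM2 : ∀ η : Δ → ℝ, BddMeas Sm η →
      IsClosed {c : ℝ | pref η (fun _ => c)} ∧ IsClosed {c : ℝ | pref (fun _ => c) η})
    (hM3 : ∀ a b : ℝ, b < a →
      pref (fun _ => a) (fun _ => b) ∧ ¬ pref (fun _ => b) (fun _ => a)) :
    ∃ ρ : (Δ → ℝ) → ℝ,
      (∀ η ζ : Δ → ℝ, BddMeas Sm η → BddMeas Sm ζ → (∀ s, ζ s ≤ η s) → ρ ζ ≤ ρ η) ∧
      (∀ a b : ℝ, b < a → ρ (fun _ => (b : ℝ)) < ρ (fun _ => (a : ℝ))) ∧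
      (∀ η ζ : Δ → ℝ, BddMeas Sm η → BddMeas Sm ζ → (pref η ζ ↔ ρ ζ ≤ ρ η)) := by
  choose! ρ hρ using fun η (hη : BddMeas Sm η) =>
    exists_certaintyEquivalent (c := fun t _ => t) htotal bddMeas_const_s7 hη (hM2 η hη).1
      (hM2 η hη).2 (exists_const_pref_and_pref_const hM1 hη).1
      (exists_const_pref_and_pref_const hM1 hη).2
  have hcr := const_pref_const_iff hM1 hM3
  have hrep : ∀ η ζ, BddMeas Sm η → BddMeas Sm ζ → (pref η ζ ↔ ρ ζ ≤ ρ η) :=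
    fun η ζ hη hζ => pref_iff_certaintyEquivalent_le htrans hcr hρ bddMeas_const_s7 hη hζ
  refine ⟨ρ, fun η ζ hη hζ hle => (hrep η ζ hη hζ).1 (hM1 η ζ hη hζ hle), fun a b hba => ?_, hrep⟩
  rwa [certaintyEquivalent_const hcr hρ bddMeas_const_s7 a,
    certaintyEquivalent_const hcr hρ bddMeas_const_s7 b]

end
end

section
/- Let ν be a continuous capacity on a measurable space (Ω, F) and let X, Y : Ω → ℝ be bounded measurable and comonotonic. Then for every α ∈ (0,1): q_ν(X + Y, α) = q_ν(X, α) + q_ν(Y, α). Moreover, for every λ ∈ [0,1] and every α ∈ (0,1): q_ν(λX, α) = λ · q_ν(X, α). (Equivalently, 𝔇_ν(X+Y) = 𝔇_ν(X) ⊕ 𝔇_ν(Y) and 𝔇_ν(λX) = λ ⊗ 𝔇_ν(X), where ⊕ and ⊗ are quantile addition and quantile scaling of distributions.) -/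
open MeasureTheory Filter Topology

noncomputable section

namespace Stmt9Aux

variable {Ω : Type*} [F : MeasurableSpace Ω]

lemma mset {X : Ω → ℝ} (hX : Measurable X) (t : ℝ) :
    MeasurableSet {ω | t < X ω} :=
  measurableSet_lt measurable_const hX

lemma upward {ν : Set Ω → ℝ} (hcap : IsCapacity F ν) {X : Ω → ℝ} (hX : Measurable X)
    {α x x' : ℝ} (h : x ≤ x') (hx : ν {ω | x < X ω} < 1 - α) :
    ν {ω | x' < X ω} < 1 - α :=
  lt_of_le_of_lt (hcap.2.2 _ _ (mset hX x') (mset hX x) fun ω hω => h.trans_lt hω) hx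

lemma mem_top {ν : Set Ω → ℝ} (hcap : IsCapacity F ν) {X : Ω → ℝ} {α M : ℝ}
    (hα1 : α < 1) (hM : ∀ ω, X ω ≤ M) : ν {ω | M < X ω} < 1 - α := by
  have h : {ω | M < X ω} = (∅ : Set Ω) := by
    ext ω; simp [not_lt.2 (hM ω)]
  rw [h, hcap.1]; linarith

lemma lb_mem {ν : Set Ω → ℝ} (hcap : IsCapacity F ν) {X : Ω → ℝ} {α m s : ℝ}
    (hα0 : 0 < α) (hm : ∀ ω, m ≤ X ω) (hs : ν {ω | s < X ω} < 1 - α) : m ≤ s := by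
  by_contra h
  push_neg at h
  have huniv : {ω | s < X ω} = (Set.univ : Set Ω) := by
    ext ω; simp [h.trans_le (hm ω)]
  rw [huniv, hcap.2.1] at hs; linarith

lemma add_quant {ν : Set Ω → ℝ} (hcap : IsCapacity F ν) {X Y : Ω → ℝ}
    (hX : BddMeas F X) (hY : BddMeas F Y) (hco : Comonotonic X Y) {α : ℝ}
    (hα0 : 0 < α) (hα1 : α < 1) :
    capQuantile ν (fun ω => X ω + Y ω) α = capQuantile ν X α + capQuantile ν Y α := by
  obtain ⟨hXm, MX, hMX⟩ := hX
  obtain ⟨hYm, MY, hMY⟩ := hY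
  have hZm : Measurable fun ω => X ω + Y ω := hXm.add hYm
  set SX : Set ℝ := {x : ℝ | ν {ω | x < X ω} < 1 - α} with hSX
  set SY : Set ℝ := {x : ℝ | ν {ω | x < Y ω} < 1 - α} with hSY
  set SZ : Set ℝ := {x : ℝ | ν {ω | x < X ω + Y ω} < 1 - α} with hSZ
  have hXne : SX.Nonempty := ⟨MX, mem_top hcap hα1 fun ω => (abs_le.1 (hMX ω)).2⟩
  have hYne : SY.Nonempty := ⟨MY, mem_top hcap hα1 fun ω => (abs_le.1 (hMY ω)).2⟩
  have hZne : SZ.Nonempty := ⟨MX + MY, mem_top hcap hα1 fun ω => by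
    have h1 := (abs_le.1 (hMX ω)).2; have h2 := (abs_le.1 (hMY ω)).2; linarith⟩
  have bddX : BddBelow SX := ⟨-MX, fun s hs => lb_mem hcap hα0
    (fun ω => (abs_le.1 (hMX ω)).1) hs⟩
  have bddY : BddBelow SY := ⟨-MY, fun s hs => lb_mem hcap hα0
    (fun ω => (abs_le.1 (hMY ω)).1) hs⟩
  have bddZ : BddBelow SZ := ⟨-(MX + MY), fun s hs => lb_mem hcap hα0
    (fun ω => by have h1 := (abs_le.1 (hMX ω)).1; have h2 := (abs_le.1 (hMY ω)).1; linarith) hs⟩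
  have hqZ : capQuantile ν (fun ω => X ω + Y ω) α = sInf SZ := rfl
  have hqX : capQuantile ν X α = sInf SX := rfl
  have hqY : capQuantile ν Y α = sInf SY := rfl
  rw [hqZ, hqX, hqY]
  have dir1 : sInf SZ ≤ sInf SX + sInf SY := by
    by_contra hc
    push_neg at hc
    obtain ⟨t, ht1, ht2⟩ := exists_between hc
    have htn : t ∉ SZ := fun h => absurd (csInf_le bddZ h) (not_le.2 ht2)
    have hA : 1 - α ≤ ν {ω | t < X ω + Y ω} := not_lt.1 htn
    set A : Set Ω := {ω | t < X ω + Y ω} with hAdef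
    have hAne : A.Nonempty := by
      rw [Set.nonempty_iff_ne_empty]; intro h
      rw [h, hcap.1] at hA; linarith
    have hIXne : (X '' A).Nonempty := hAne.image X
    have hIYne : (Y '' A).Nonempty := hAne.image Y
    have hIXbd : BddBelow (X '' A) := ⟨-MX, by
      rintro _ ⟨ω, _, rfl⟩; exact (abs_le.1 (hMX ω)).1⟩
    have hIYbd : BddBelow (Y '' A) := ⟨-MY, by
      rintro _ ⟨ω, _, rfl⟩; exact (abs_le.1 (hMY ω)).1⟩
    set x := sInf (X '' A) with hxdef
    set y := sInf (Y '' A) with hydef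
    have hxq : x ≤ sInf SX := by
      apply le_of_forall_pos_le_add
      intro ε hε
      have hnm : x - ε ∉ SX := by
        intro hmem
        have hsub : A ⊆ {ω | x - ε < X ω} := by
          intro ω hω
          have hle : x ≤ X ω := csInf_le hIXbd ⟨ω, hω, rfl⟩
          simp only [Set.mem_setOf_eq]; linarith
        have hle := hcap.2.2 _ _ (measurableSet_lt measurable_const hZm)
          (mset hXm (x - ε)) hsub
        rw [hSX] at hmem
        simp only [Set.mem_setOf_eq] at hmem
        linarith
      have hle : x - ε ≤ sInf SX := le_csInf hXne fun s hs => by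
        by_contra h'; push_neg at h'
        exact hnm (upward hcap hXm h'.le hs)
      linarith
    have hyq : y ≤ sInf SY := by
      apply le_of_forall_pos_le_add
      intro ε hε
      have hnm : y - ε ∉ SY := by
        intro hmem
        have hsub : A ⊆ {ω | y - ε < Y ω} := by
          intro ω hω
          have hle : y ≤ Y ω := csInf_le hIYbd ⟨ω, hω, rfl⟩
          simp only [Set.mem_setOf_eq]; linarith
        have hle := hcap.2.2 _ _ (measurableSet_lt measurable_const hZm)
          (mset hYm (y - ε)) hsub
        rw [hSY] at hmem
        simp only [Set.mem_setOf_eq] at hmem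
        linarith
      have hle : y - ε ≤ sInf SY := le_csInf hYne fun s hs => by
        by_contra h'; push_neg at h'
        exact hnm (upward hcap hYm h'.le hs)
      linarith
    have htxy : t ≤ x + y := by
      apply le_of_forall_pos_le_add
      intro ε hε
      obtain ⟨x', hx'mem, hx'⟩ := exists_lt_of_csInf_lt hIXne
        (lt_add_of_pos_right x (half_pos hε))
      obtain ⟨ω₁, hω₁, rfl⟩ := hx'mem
      obtain ⟨y', hy'mem, hy'⟩ := exists_lt_of_csInf_lt hIYne
        (lt_add_of_pos_right y (half_pos hε))
      obtain ⟨ω₂, hω₂, rfl⟩ := hy'mem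
      have h1 : t < X ω₁ + Y ω₁ := hω₁
      have h2 : t < X ω₂ + Y ω₂ := hω₂
      have hcm := hco ω₁ ω₂
      rcases le_or_gt (Y ω₁) (Y ω₂) with h | h
      · linarith
      · have hxx : X ω₂ ≤ X ω₁ := by nlinarith
        linarith
    linarith
  have dir2 : sInf SX + sInf SY ≤ sInf SZ := by
    by_contra hc
    push_neg at hc
    obtain ⟨t, ht1, ht2⟩ := exists_between hc
    have htm : ν {ω | t < X ω + Y ω} < 1 - α := by
      obtain ⟨s, hs, hst⟩ := exists_lt_of_csInf_lt hZne ht1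
      exact upward hcap hZm hst.le hs
    set B : Set Ω := {ω | X ω + Y ω ≤ t} with hBdef
    have hBne : B.Nonempty := by
      rw [Set.nonempty_iff_ne_empty]; intro h
      have huniv : {ω | t < X ω + Y ω} = (Set.univ : Set Ω) := by
        ext ω
        simp only [Set.mem_setOf_eq, Set.mem_univ, iff_true]
        by_contra h'
        push_neg at h'
        have hωB : ω ∈ B := h'
        rw [h] at hωB
        exact hωB
      rw [huniv, hcap.2.1] at htm; linarith
    have hIXne : (X '' B).Nonempty := hBne.image X
    have hIYne : (Y '' B).Nonempty := hBne.image Y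
    have hIXbd : BddAbove (X '' B) := ⟨MX, by
      rintro _ ⟨ω, _, rfl⟩; exact (abs_le.1 (hMX ω)).2⟩
    have hIYbd : BddAbove (Y '' B) := ⟨MY, by
      rintro _ ⟨ω, _, rfl⟩; exact (abs_le.1 (hMY ω)).2⟩
    set x := sSup (X '' B) with hxdef
    set y := sSup (Y '' B) with hydef
    have hqx : sInf SX ≤ x := by
      apply csInf_le bddX
      have hsub : {ω | x < X ω} ⊆ {ω | t < X ω + Y ω} := by
        intro ω hω
        simp only [Set.mem_setOf_eq] at hω ⊢
        by_contra h'
        push_neg at h'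
        have hle : X ω ≤ x := le_csSup hIXbd ⟨ω, h', rfl⟩
        linarith
      exact lt_of_le_of_lt (hcap.2.2 _ _ (mset hXm x)
        (measurableSet_lt measurable_const hZm) hsub) htm
    have hqy : sInf SY ≤ y := by
      apply csInf_le bddY
      have hsub : {ω | y < Y ω} ⊆ {ω | t < X ω + Y ω} := by
        intro ω hω
        simp only [Set.mem_setOf_eq] at hω ⊢
        by_contra h'
        push_neg at h'
        have hle : Y ω ≤ y := le_csSup hIYbd ⟨ω, h', rfl⟩
        linarith
      exact lt_of_le_of_lt (hcap.2.2 _ _ (mset hYm y)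
        (measurableSet_lt measurable_const hZm) hsub) htm
    have hxy : x + y ≤ t := by
      apply le_of_forall_pos_le_add
      intro ε hε
      obtain ⟨x', hx'mem, hx'⟩ := exists_lt_of_lt_csSup hIXne
        (sub_lt_self x (half_pos hε))
      obtain ⟨ω₁, hω₁, rfl⟩ := hx'mem
      obtain ⟨y', hy'mem, hy'⟩ := exists_lt_of_lt_csSup hIYne
        (sub_lt_self y (half_pos hε))
      obtain ⟨ω₂, hω₂, rfl⟩ := hy'mem
      have h1 : X ω₁ + Y ω₁ ≤ t := hω₁
      have h2 : X ω₂ + Y ω₂ ≤ t := hω₂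
      have hcm := hco ω₁ ω₂
      rcases le_or_gt (Y ω₂) (Y ω₁) with h | h
      · linarith
      · have hxx : X ω₁ ≤ X ω₂ := by nlinarith
        linarith
    linarith
  linarith

lemma smul_quant {ν : Set Ω → ℝ} (hcap : IsCapacity F ν) {X : Ω → ℝ}
    (hX : BddMeas F X) {α : ℝ} (hα0 : 0 < α) (hα1 : α < 1) {l : ℝ} (hl : 0 ≤ l) :
    capQuantile ν (fun ω => l * X ω) α = l * capQuantile ν X α := by
  obtain ⟨hXm, MX, hMX⟩ := hX
  set SX : Set ℝ := {x : ℝ | ν {ω | x < X ω} < 1 - α} with hSXdef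
  have hXne : SX.Nonempty := ⟨MX, mem_top hcap hα1 fun ω => (abs_le.1 (hMX ω)).2⟩
  have bddX : BddBelow SX := ⟨-MX, fun s hs => lb_mem hcap hα0
    (fun ω => (abs_le.1 (hMX ω)).1) hs⟩
  rcases eq_or_lt_of_le hl with rfl | hlpos
  · simp only [zero_mul]
    have hset : {x : ℝ | ν {ω : Ω | x < (0 : ℝ)} < 1 - α} = Set.Ici 0 := by
      ext x
      rcases le_or_gt 0 x with h | h
      · have hempty : {ω : Ω | x < (0 : ℝ)} = ∅ := by
          ext ω; simp only [Set.mem_setOf_eq, Set.mem_empty_iff_false, iff_false, not_lt]; exact h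
        simp only [Set.mem_setOf_eq, hempty, hcap.1, Set.mem_Ici]
        constructor
        · intro _; exact h
        · intro _; linarith
      · have huniv : {ω : Ω | x < (0 : ℝ)} = (Set.univ : Set Ω) := by
          ext ω; simp only [Set.mem_setOf_eq, Set.mem_univ, iff_true]; exact h
        simp only [Set.mem_setOf_eq, huniv, hcap.2.1, Set.mem_Ici]
        constructor
        · intro hh; linarith
        · intro hh; linarith
      -- end
    show sInf {x : ℝ | ν {ω : Ω | x < (0 : ℝ)} < 1 - α} = 0
    rw [hset, csInf_Ici]
  · set Sl : Set ℝ := {x : ℝ | ν {ω | x < l * X ω} < 1 - α} with hSldef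
    have hmemiff : ∀ s : ℝ, s ∈ Sl ↔ s / l ∈ SX := by
      intro s
      have hseteq : {ω | s < l * X ω} = {ω | s / l < X ω} := by
        ext ω; simp only [Set.mem_setOf_eq]
        rw [div_lt_iff₀ hlpos]
        constructor <;> intro h <;> linarith [mul_comm l (X ω)]
      simp only [hSldef, hSXdef, Set.mem_setOf_eq, hseteq]
    have hSlne : Sl.Nonempty := ⟨l * MX, (hmemiff (l * MX)).2 (by
      rw [mul_div_cancel_left₀ _ (ne_of_gt hlpos)]
      exact mem_top hcap hα1 fun ω => (abs_le.1 (hMX ω)).2)⟩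
    have hq : capQuantile ν (fun ω => l * X ω) α = sInf Sl := rfl
    have hqX : capQuantile ν X α = sInf SX := rfl
    rw [hq, hqX]
    apply le_antisymm
    · rw [show l * sInf SX = l * sInf SX from rfl]
      have h1 : sInf Sl / l ≤ sInf SX := le_csInf hXne fun s hs => by
        have : l * s ∈ Sl := (hmemiff (l * s)).2 (by
          rwa [mul_div_cancel_left₀ _ (ne_of_gt hlpos)])
        have := csInf_le (⟨l * (-MX), fun r hr => by
          have := lb_mem hcap hα0 (fun ω => (abs_le.1 (hMX ω)).1) ((hmemiff r).1 hr)
          rw [le_div_iff₀ hlpos] at this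
          linarith [mul_comm (-MX) l]⟩ : BddBelow Sl) this
        rw [div_le_iff₀ hlpos]
        linarith [mul_comm s l]
      rw [div_le_iff₀ hlpos] at h1
      linarith [mul_comm (sInf SX) l]
    · apply le_csInf hSlne
      intro s hs
      have h2 : sInf SX ≤ s / l := csInf_le bddX ((hmemiff s).1 hs)
      rw [le_div_iff₀ hlpos] at h2
      linarith [mul_comm (sInf SX) l]

end Stmt9Aux

/-- comonotonic additivity and positive homogeneity of ν-quantiles
(Proposition `prop:oper`). -/
theorem stmt9 {Ω : Type*} [F : MeasurableSpace Ω] (ν : Set Ω → ℝ)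
    (hν : IsContinuousCapacity F ν) (X Y : Ω → ℝ)
    (hX : BddMeas F X) (hY : BddMeas F Y) (hco : Comonotonic X Y) :
    (∀ α : ℝ, 0 < α → α < 1 →
      capQuantile ν (fun ω => X ω + Y ω) α = capQuantile ν X α + capQuantile ν Y α) ∧
    (∀ l : ℝ, 0 ≤ l → l ≤ 1 → ∀ α : ℝ, 0 < α → α < 1 →
      capQuantile ν (fun ω => l * X ω) α = l * capQuantile ν X α) := by
  obtain ⟨hcap, -, -⟩ := hν
  exact ⟨fun α hα0 hα1 => Stmt9Aux.add_quant hcap hX hY hco hα0 hα1,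
    fun l hl0 _ α hα0 hα1 => Stmt9Aux.smul_quant hcap hX hα0 hα1 hl0⟩

end
end
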